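/- arXiv:cond-mat/0305462 — 2 statements merged into one kernel-verified Lean document; each statement's English description precedes it below -/
import Mathlib

section
/- For β > 1 the mean field equation m = tanh(β·m) has a unique solution m* in the open interval (0, 1). -/
/-!
Strict concavity of `tanh` on `[0, ∞)` together with `tanh 0 = 0` makes `tanh x / x` strictly
decreasing on `(0, ∞)`. With `x = β m`, a positive solution of `m = tanh (β m)` is exactly a point
where `tanh x / x = 1 / β`, so there is at most one. Existence follows from the intermediate value
theorem for `tanh (β m) - m` on `[(β - 1) / β, 1]`, using `x / (1 + x) < tanh x` at the left end.
-/

open Set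

namespace Real

theorem hasDerivAt_tanh (x : ℝ) : HasDerivAt tanh (cosh x ^ 2)⁻¹ x := by
  rw [show tanh = fun y => sinh y / cosh y from funext tanh_eq_sinh_div_cosh]
  refine ((hasDerivAt_sinh x).div (hasDerivAt_cosh x) (cosh_pos x).ne').congr_deriv ?_
  rw [← sq, ← sq, cosh_sq_sub_sinh_sq, one_div]

@[fun_prop]
theorem continuous_tanh : Continuous tanh :=
  continuous_iff_continuousAt.2 fun x => (hasDerivAt_tanh x).continuousAt

theorem strictConcaveOn_tanh : StrictConcaveOn ℝ (Ici 0) tanh := by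
  refine StrictAntiOn.strictConcaveOn_of_deriv (convex_Ici 0) continuous_tanh.continuousOn ?_
  rw [interior_Ici]
  intro x (hx : 0 < x) y (hy : 0 < y) hxy
  rw [(hasDerivAt_tanh x).deriv, (hasDerivAt_tanh y).deriv]
  have hcosh : cosh x < cosh y := cosh_strictMonoOn hx.le hy.le hxy
  gcongr

theorem strictAntiOn_tanh_div_self : StrictAntiOn (fun x => tanh x / x) (Ioi 0) := by
  intro x (hx : 0 < x) y (hy : 0 < y) hxy
  simpa only [tanh_zero, sub_zero] using
    strictConcaveOn_tanh.secant_strict_mono (a := 0) self_mem_Ici hx.le hy.le hx.ne' hy.ne' hxy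

theorem div_one_add_lt_tanh {x : ℝ} (hx : 0 < x) : x / (1 + x) < tanh x := by
  rw [tanh_eq_sinh_div_cosh, div_lt_div_iff₀ (by positivity) (cosh_pos x)]
  have hsinh : x < sinh x := self_lt_sinh_iff.2 hx
  have hcosh : cosh x < sinh x + 1 := by
    linarith [cosh_sub_sinh x, exp_lt_one_iff.2 (neg_lt_zero.2 hx)]
  nlinarith

end Real

open Real

theorem eq_of_eq_tanh_mul {β a b : ℝ} (hβ : 0 < β) (ha : 0 < a) (hb : 0 < b)
    (hae : a = tanh (β * a)) (hbe : b = tanh (β * b)) : a = b := by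
  have hslope : ∀ m, 0 < m → m = tanh (β * m) → tanh (β * m) / (β * m) = β⁻¹ := by
    intro m hm hme
    rw [← hme, mul_comm, div_mul_cancel_left₀ hm.ne']
  have hinj := strictAntiOn_tanh_div_self.injOn (mul_pos hβ ha) (mul_pos hβ hb)
    ((hslope a ha hae).trans (hslope b hb hbe).symm)
  exact mul_left_cancel₀ hβ.ne' hinj

theorem exists_mem_Ioo_eq_tanh_mul {β : ℝ} (hβ : 1 < β) :
    ∃ m ∈ Ioo (0 : ℝ) 1, m = tanh (β * m) := by
  set m₀ := (β - 1) / β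
  have hβ0 : 0 < β := zero_lt_one.trans hβ
  have hm₀ : m₀ ∈ Ioo (0 : ℝ) 1 := ⟨div_pos (by linarith) hβ0, (div_lt_one hβ0).2 (by linarith)⟩
  have hleft : m₀ < tanh (β * m₀) := by
    have h := div_one_add_lt_tanh (sub_pos.2 hβ)
    rw [add_sub_cancel] at h
    rwa [mul_div_cancel₀ _ hβ0.ne']
  have hright : tanh (β * 1) < 1 := tanh_lt_one _
  have hcont : ContinuousOn (fun m => tanh (β * m) - m) (Icc m₀ 1) := by fun_prop
  obtain ⟨m, hm, hfm⟩ := intermediate_value_Ioo' hm₀.2.le hcont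
    (show (0 : ℝ) ∈ Ioo _ _ from ⟨by linarith, by linarith⟩)
  exact ⟨m, ⟨hm₀.1.trans hm.1, hm.2⟩, (sub_eq_zero.1 hfm).symm⟩

theorem meanField_unique_positive_solution (β : ℝ) (hβ : 1 < β) :
    ∃! m : ℝ, m ∈ Set.Ioo (0 : ℝ) 1 ∧ m = Real.tanh (β * m) := by
  obtain ⟨m, hm, hme⟩ := exists_mem_Ioo_eq_tanh_mul hβ
  exact ⟨m, ⟨hm, hme⟩, fun n ⟨hn, hne⟩ =>
    eq_of_eq_tanh_mul (zero_lt_one.trans hβ) hn.1 hm.1 hne hme⟩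
end

section
/- For 0 < β ≤ 1, the mean field free energy g_β(m) = -m²/2 - (1/β)·I(m) is convex on (-1,1). -/
/-!
Since `I'(m) = -artanh m` and `artanh' m = 1 / (1 - m²)`, the second derivative of `g_β` is
`-1 + 1 / (β (1 - m²))`, which is nonnegative on `(-1, 1)` because `β ≤ 1 ≤ 1 / (1 - m²)`.
-/

noncomputable def binEntropy (m : ℝ) : ℝ :=
  -((1 - m) / 2) * Real.log ((1 - m) / 2) - ((1 + m) / 2) * Real.log ((1 + m) / 2)

noncomputable def meanFieldFreeEnergy (β m : ℝ) : ℝ := -m ^ 2 / 2 - binEntropy m / β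

open Set

namespace Real

lemma artanh_eq_half_log_sub {x : ℝ} (hx : x ∈ Ioo (-1) 1) :
    artanh x = (log (1 + x) - log (1 - x)) / 2 := by
  rw [artanh_eq_half_log (Ioo_subset_Icc_self hx),
    log_div (by linarith [hx.1]) (by linarith [hx.2])]
  ring

lemma hasDerivAt_artanh {x : ℝ} (hx : x ∈ Ioo (-1) 1) :
    HasDerivAt artanh (1 - x ^ 2)⁻¹ x := by
  have hadd : 1 + x ≠ 0 := by linarith [hx.1]
  have hsub : 1 - x ≠ 0 := by linarith [hx.2]
  have hlog := ((((hasDerivAt_id' x).const_add 1).log hadd).sub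
    (((hasDerivAt_id' x).const_sub 1).log hsub)).div_const 2
  refine (hlog.congr_of_eventuallyEq ?_).congr_deriv ?_
  · filter_upwards [isOpen_Ioo.mem_nhds hx] with y hy using artanh_eq_half_log_sub hy
  · rw [show 1 - x ^ 2 = (1 + x) * (1 - x) by ring]
    field_simp
    ring

end Real

lemma binEntropy_eq_negMulLog_add_negMulLog (m : ℝ) :
    binEntropy m = Real.negMulLog ((1 - m) / 2) + Real.negMulLog ((1 + m) / 2) := by
  simp only [binEntropy, Real.negMulLog]
  ring

lemma hasDerivAt_binEntropy {m : ℝ} (hm : m ∈ Ioo (-1) 1) :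
    HasDerivAt binEntropy (-Real.artanh m) m := by
  have hadd : 1 + m ≠ 0 := by linarith [hm.1]
  have hsub : 1 - m ≠ 0 := by linarith [hm.2]
  have hsum := ((Real.hasDerivAt_negMulLog (by positivity : (1 - m) / 2 ≠ 0)).comp m
    (((hasDerivAt_id' m).const_sub 1).div_const 2)).add
    ((Real.hasDerivAt_negMulLog (by positivity : (1 + m) / 2 ≠ 0)).comp m
    (((hasDerivAt_id' m).const_add 1).div_const 2))
  rw [funext binEntropy_eq_negMulLog_add_negMulLog]
  refine hsum.congr_deriv ?_
  rw [Real.artanh_eq_half_log_sub hm, Real.log_div hsub two_ne_zero,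
    Real.log_div hadd two_ne_zero]
  ring

lemma hasDerivAt_meanFieldFreeEnergy (β : ℝ) {m : ℝ} (hm : m ∈ Ioo (-1) 1) :
    HasDerivAt (meanFieldFreeEnergy β) (-m + Real.artanh m / β) m := by
  have hsq : HasDerivAt (fun x : ℝ => -x ^ 2 / 2) (-m) m :=
    ((hasDerivAt_pow 2 m).neg.div_const 2).congr_deriv (by ring)
  exact (hsq.sub ((hasDerivAt_binEntropy hm).div_const β)).congr_deriv (by ring)

lemma hasDerivAt_neg_add_artanh_div (β : ℝ) {m : ℝ} (hm : m ∈ Ioo (-1) 1) :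
    HasDerivAt (fun x => -x + Real.artanh x / β) (-1 + (1 - m ^ 2)⁻¹ / β) m :=
  (hasDerivAt_neg m).add ((Real.hasDerivAt_artanh hm).div_const β)

theorem meanFieldFreeEnergy_convex (β : ℝ) (hβ0 : 0 < β) (hβ1 : β ≤ 1) :
    ConvexOn ℝ (Set.Ioo (-1 : ℝ) 1) (meanFieldFreeEnergy β) := by
  refine convexOn_of_hasDerivWithinAt2_nonneg (convex_Ioo _ _)
    (f' := fun m => -m + Real.artanh m / β) (f'' := fun m => -1 + (1 - m ^ 2)⁻¹ / β)
    (fun m hm => (hasDerivAt_meanFieldFreeEnergy β hm).continuousAt.continuousWithinAt)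
    ?_ ?_ ?_ <;> rw [interior_Ioo]
  · exact fun m hm => (hasDerivAt_meanFieldFreeEnergy β hm).hasDerivWithinAt
  · exact fun m hm => (hasDerivAt_neg_add_artanh_div β hm).hasDerivWithinAt
  · intro m hm
    have hsq : 0 < 1 - m ^ 2 := by nlinarith [hm.1, hm.2]
    have hinv : 1 ≤ (1 - m ^ 2)⁻¹ := (one_le_inv₀ hsq).mpr (by nlinarith)
    have hdiv : 1 ≤ (1 - m ^ 2)⁻¹ / β := (one_le_div hβ0).mpr (hβ1.trans hinv)
    linarith
end
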